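/- Let f, g : [0,1] → [0,∞) be continuous functions that are both strictly decreasing, let s > 1, and let μ be Lebesgue measure on ℝ. Then (Sugeno ∫₀¹ f^s dμ) · (Sugeno ∫₀¹ g^s dμ) ≤ Sugeno ∫₀¹ (f·g)^s dμ. -/

import Mathlib

open MeasureTheory Set

/-- Sugeno integral of `f` over `A` w.r.t. measure `μ`. -/
noncomputable def sugeno (μ : Measure ℝ) (A : Set ℝ) (f : ℝ → ℝ) : ℝ :=
  ⨆ α : {a : ℝ // 0 ≤ a}, min α.1 (μ (A ∩ {x | α.1 ≤ f x})).toReal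

/-!
Superlevel sets of two functions that vary together are nested, so in a space of total mass at
most one the superlevel set of `h₁ * h₂` at height `β * γ` has measure at least
`min S₁ S₂ ≥ S₁ * S₂` whenever `β < S₁` and `γ < S₂` (`Sᵢ` the Sugeno integrals of `hᵢ`).
Hence the Sugeno integral of `h₁ * h₂` is at least `β * γ`, and letting `β ↑ S₁`, `γ ↑ S₂` gives
`S₁ * S₂` (a Chebyshev inequality). Powers `f ^ s`, `g ^ s` of nonnegative decreasing functions
vary together, and `(f * g) ^ s = f ^ s * g ^ s`.
-/

theorem AntitoneOn.rpow_const {α : Type*} [Preorder α] {f : α → ℝ} {t : Set α}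
    (hf : AntitoneOn f t) (hf_nonneg : ∀ x ∈ t, 0 ≤ f x) {p : ℝ} (hp : 0 ≤ p) :
    AntitoneOn (fun x => f x ^ p) t :=
  fun _ hx _ hy hxy => Real.rpow_le_rpow (hf_nonneg _ hy) (hf hx hy hxy) hp

theorem MonovaryOn.inter_setOf_le_subset_or {ι : Type*} {h₁ h₂ : ι → ℝ} {A : Set ι}
    (h : MonovaryOn h₁ h₂ A) (β γ : ℝ) :
    A ∩ {x | β ≤ h₁ x} ⊆ A ∩ {x | γ ≤ h₂ x} ∨ A ∩ {x | γ ≤ h₂ x} ⊆ A ∩ {x | β ≤ h₁ x} := by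
  by_contra! hc
  obtain ⟨x, ⟨hxA, hβx⟩, hγx⟩ := not_subset.mp hc.1
  obtain ⟨y, ⟨hyA, hγy⟩, hβy⟩ := not_subset.mp hc.2
  have hxy : h₂ x < h₂ y := lt_of_lt_of_le (not_le.mp fun h => hγx ⟨hxA, h⟩) hγy
  exact hβy ⟨hyA, hβx.trans (h hxA hyA hxy)⟩

section Sugeno

variable {μ : Measure ℝ} {A : Set ℝ}

theorem sugeno_congr {h h' : ℝ → ℝ} (hh : EqOn h h' A) : sugeno μ A h = sugeno μ A h' := by
  have hsets (α : ℝ) : A ∩ {x | α ≤ h x} = A ∩ {x | α ≤ h' x} :=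
    Set.ext fun x => and_congr_right fun hx => iff_of_eq (congrArg (α ≤ ·) (hh hx))
  simp only [sugeno, hsets]

section FiniteMass

variable (hA : μ A ≠ ⊤) (h : ℝ → ℝ)
include hA

theorem toReal_measure_inter_le (α : ℝ) :
    (μ (A ∩ {x | α ≤ h x})).toReal ≤ (μ A).toReal :=
  ENNReal.toReal_mono hA (measure_mono inter_subset_left)

theorem bddAbove_range_min :
    BddAbove (range fun α : {a : ℝ // 0 ≤ a} => min α.1 (μ (A ∩ {x | α.1 ≤ h x})).toReal) :=
  ⟨(μ A).toReal, by
    rintro _ ⟨α, rfl⟩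
    exact (min_le_right _ _).trans (toReal_measure_inter_le hA h α.1)⟩

theorem min_le_sugeno {α : ℝ} (hα : 0 ≤ α) :
    min α (μ (A ∩ {x | α ≤ h x})).toReal ≤ sugeno μ A h :=
  le_ciSup (bddAbove_range_min hA h) ⟨α, hα⟩

theorem sugeno_nonneg : 0 ≤ sugeno μ A h := by
  simpa using min_le_sugeno hA h le_rfl

theorem sugeno_le_toReal_measure : sugeno μ A h ≤ (μ A).toReal :=
  ciSup_le fun α => (min_le_right _ _).trans (toReal_measure_inter_le hA h α.1)

theorem sugeno_le_max (β : ℝ) : sugeno μ A h ≤ max β (μ (A ∩ {x | β ≤ h x})).toReal := by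
  refine ciSup_le fun α => ?_
  rcases le_or_gt α.1 β with hαβ | hβα
  · exact le_max_of_le_left ((min_le_left _ _).trans hαβ)
  · refine le_max_of_le_right ((min_le_right _ _).trans (ENNReal.toReal_mono ?_ ?_))
    · exact ne_top_of_le_ne_top hA (measure_mono inter_subset_left)
    · exact measure_mono (inter_subset_inter_right _ fun x hx => hβα.le.trans hx)

theorem sugeno_le_toReal_measure_of_lt {β : ℝ} (hβ : β < sugeno μ A h) :
    sugeno μ A h ≤ (μ (A ∩ {x | β ≤ h x})).toReal :=
  (le_max_iff.mp (sugeno_le_max hA h β)).resolve_left hβ.not_ge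

end FiniteMass

theorem sugeno_mul_le_of_monovaryOn (hA : μ A ≤ 1) {h₁ h₂ : ℝ → ℝ} (hmono : MonovaryOn h₁ h₂ A) :
    sugeno μ A h₁ * sugeno μ A h₂ ≤ sugeno μ A (fun x => h₁ x * h₂ x) := by
  have hA_ne_top : μ A ≠ ⊤ := ne_top_of_le_ne_top ENNReal.one_ne_top hA
  have hA_toReal : (μ A).toReal ≤ 1 := ENNReal.toReal_le_of_le_ofReal zero_le_one (by simpa)
  set S₁ := sugeno μ A h₁
  set S₂ := sugeno μ A h₂
  have hS₁ : S₁ ≤ 1 := (sugeno_le_toReal_measure hA_ne_top h₁).trans hA_toReal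
  have hS₂ : S₂ ≤ 1 := (sugeno_le_toReal_measure hA_ne_top h₂).trans hA_toReal
  refine mul_le_of_forall_lt_of_nonneg (sugeno_nonneg hA_ne_top h₁)
    (sugeno_nonneg hA_ne_top _) fun β hβ0 hβ γ hγ0 hγ => ?_
  set A₁ := A ∩ {x | β ≤ h₁ x}
  set A₂ := A ∩ {x | γ ≤ h₂ x}
  have hmin : min S₁ S₂ ≤ (μ (A₁ ∩ A₂)).toReal := by
    rcases hmono.inter_setOf_le_subset_or β γ with h12 | h21
    · rw [inter_eq_left.mpr h12]
      exact min_le_of_left_le (sugeno_le_toReal_measure_of_lt hA_ne_top h₁ hβ)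
    · rw [inter_eq_right.mpr h21]
      exact min_le_of_right_le (sugeno_le_toReal_measure_of_lt hA_ne_top h₂ hγ)
  have hprod : A₁ ∩ A₂ ⊆ A ∩ {x | β * γ ≤ h₁ x * h₂ x} := fun x ⟨⟨hx, hβx⟩, ⟨_, hγx⟩⟩ =>
    ⟨hx, mul_le_mul hβx hγx hγ0 (hβ0.trans hβx)⟩
  have hlevel : β * γ ≤ (μ (A ∩ {x | β * γ ≤ h₁ x * h₂ x})).toReal :=
    calc β * γ ≤ S₁ * S₂ := mul_le_mul hβ.le hγ.le hγ0 (hβ0.trans hβ.le)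
      _ ≤ min S₁ S₂ := le_min (mul_le_of_le_one_right (hβ0.trans hβ.le) hS₂)
          (mul_le_of_le_one_left (hγ0.trans hγ.le) hS₁)
      _ ≤ (μ (A₁ ∩ A₂)).toReal := hmin
      _ ≤ _ := ENNReal.toReal_mono (ne_top_of_le_ne_top hA_ne_top (measure_mono inter_subset_left))
          (measure_mono hprod)
  simpa [min_eq_left hlevel] using min_le_sugeno hA_ne_top (fun x => h₁ x * h₂ x)
    (mul_nonneg hβ0 hγ0)

end Sugeno

theorem diaz_metcalf_sugeno_decreasing_general (f g : ℝ → ℝ) (s : ℝ) (hs : 1 < s)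
    (hf_anti : StrictAntiOn f (Set.Icc 0 1)) (hg_anti : StrictAntiOn g (Set.Icc 0 1))
    (hf_nonneg : ∀ x ∈ Set.Icc (0 : ℝ) 1, 0 ≤ f x)
    (hg_nonneg : ∀ x ∈ Set.Icc (0 : ℝ) 1, 0 ≤ g x) :
    sugeno volume (Set.Icc 0 1) (fun x => f x ^ s) *
      sugeno volume (Set.Icc 0 1) (fun x => g x ^ s) ≤
    sugeno volume (Set.Icc 0 1) (fun x => (f x * g x) ^ s) := by
  have hmono : MonovaryOn (fun x => f x ^ s) (fun x => g x ^ s) (Icc 0 1) :=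
    (hf_anti.antitoneOn.rpow_const hf_nonneg (zero_le_one.trans hs.le)).monovaryOn
      (hg_anti.antitoneOn.rpow_const hg_nonneg (zero_le_one.trans hs.le))
  calc _ ≤ sugeno volume (Icc 0 1) (fun x => f x ^ s * g x ^ s) :=
        sugeno_mul_le_of_monovaryOn (by simp) hmono
    _ = _ := sugeno_congr fun x hx => (Real.mul_rpow (hf_nonneg x hx) (hg_nonneg x hx)).symm

theorem diaz_metcalf_sugeno_decreasing (f g : ℝ → ℝ) (s : ℝ) (hs : 1 < s)
    (hf_cont : ContinuousOn f (Set.Icc 0 1)) (hg_cont : ContinuousOn g (Set.Icc 0 1))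
    (hf_anti : StrictAntiOn f (Set.Icc 0 1)) (hg_anti : StrictAntiOn g (Set.Icc 0 1))
    (hf_nonneg : ∀ x ∈ Set.Icc (0 : ℝ) 1, 0 ≤ f x)
    (hg_nonneg : ∀ x ∈ Set.Icc (0 : ℝ) 1, 0 ≤ g x) :
    sugeno volume (Set.Icc 0 1) (fun x => f x ^ s) *
      sugeno volume (Set.Icc 0 1) (fun x => g x ^ s) ≤
    sugeno volume (Set.Icc 0 1) (fun x => (f x * g x) ^ s) :=
  diaz_metcalf_sugeno_decreasing_general f g s hs hf_anti hg_anti hf_nonneg hg_nonneg
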